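/- arXiv:2501.17730 — 10 statements merged into one kernel-verified Lean document; each statement's English description precedes it below -/
import Mathlib

section
/- Let X be a finite-dimensional normed space over ℚ (with norm taking values in ℚ). If there exist linear functionals u₁*, ..., uₙ* : X → ℚ such that ‖x‖ = max{|uᵢ*(x)| : 1 ≤ i ≤ n} for all x ∈ X, then the pseudonorm on ℝ^d (where d = dim X, identifying X with ℚ^d) defined by the same formula using the ℝ-linear extensions of the uᵢ* is in fact a norm. -/
/-! The functionals `uᵢ*` are the rows of a rational matrix `M`. Positivity of the norm says that
`M` has trivial kernel over `ℚ`, i.e. its columns are linearly independent over `ℚ`. Linear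
independence of rational vectors persists over `ℝ`, so `M` still has trivial kernel over `ℝ`,
and then `max |(M x)ᵢ| > 0` for every real `x ≠ 0`. -/

open Finset Matrix

theorem Matrix.injective_mulVec_map_algebraMap_iff {m n R S : Type*} [Finite m] [Fintype n]
    [CommRing R] [CommRing S] [Algebra R S] [FaithfulSMul R S] [IsDomain S]
    {M : Matrix m n R} :
    Function.Injective (M.map (algebraMap R S)).mulVec ↔ Function.Injective M.mulVec := by
  rw [mulVec_injective_iff, mulVec_injective_iff]
  exact linearIndependent_algebraMap_comp_iff

theorem Finset.zero_lt_sup'_abs_iff {ι α : Type*} [Fintype ι] [AddCommGroup α] [LinearOrder α]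
    [IsOrderedAddMonoid α] (h : (univ : Finset ι).Nonempty) (v : ι → α) :
    0 < univ.sup' h (fun i => |v i|) ↔ v ≠ 0 := by
  simp [lt_sup'_iff, Function.ne_iff]

/-- If a rational-valued norm on `ℚ^d` is the max of absolute values of finitely many
ℚ-linear functionals, then the pseudonorm on `ℝ^d` defined by the same formula (via the
ℝ-linear extensions of the functionals) is a norm, i.e., it is positive on nonzero vectors. -/
theorem rational_polyhedral_norm_real_extension_is_norm
    {d n : ℕ} (N : (Fin d → ℚ) → ℚ)
    (hpos : ∀ x : Fin d → ℚ, x ≠ 0 → 0 < N x)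
    (u : Fin (n + 1) → ((Fin d → ℚ) →ₗ[ℚ] ℚ))
    (hN : ∀ x, N x = Finset.univ.sup' Finset.univ_nonempty (fun i => |u i x|)) :
    ∀ x : Fin d → ℝ, x ≠ 0 →
      0 < Finset.univ.sup' Finset.univ_nonempty
        (fun i : Fin (n + 1) => |∑ j, (u i (Pi.single j 1) : ℝ) * x j|) := by
  intro x hx
  set M := LinearMap.toMatrix' (LinearMap.pi u)
  have hM : Function.Injective M.mulVec := by
    have hMpi : M.mulVec = LinearMap.pi u := funext (LinearMap.toMatrix'_mulVec _)
    rw [hMpi, injective_iff_map_eq_zero]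
    intro y hy
    by_contra hy0
    exact (zero_lt_sup'_abs_iff _ _).1 (hN y ▸ hpos y hy0) hy
  have hMx := (injective_mulVec_map_algebraMap_iff (S := ℝ).2 hM).ne hx
  rw [mulVec_zero] at hMx
  have hrow : M.map (algebraMap ℚ ℝ) *ᵥ x = fun i => ∑ j, (u i (Pi.single j 1) : ℝ) * x j := by
    ext i
    simp [M, mulVec, dotProduct, mul_comm]
  exact (zero_lt_sup'_abs_iff univ_nonempty _).2 (hrow ▸ hMx)
end

section
/- Let x ∈ ℚ^d be a point in the convex hull (over ℝ) of points a₁, ..., aₘ ∈ ℚ^d. Then x can be expressed as a convex combination of a₁, ..., aₘ with rational coefficients. -/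
/-!
By Carathéodory, `x` is a positive real convex combination of affinely independent points among
the `aₖ`. Affine independence of these points is linear independence of their homogenizations
`(1, aₖ)`, and linear independence of rational vectors is the same over `ℚ` and over `ℝ`; hence
the homogenization of `x`, lying in their real span, lies in their rational span. The rational
weights so obtained are also real barycentric coordinates of `x`, so they coincide with the
positive real ones.
-/

open Finset Set Submodule

-- `Option.elim' 1 q` is the homogenization `(1, q)`, its new coordinate being indexed by `none`.
theorem AffineIndependent.linearIndependent_elim' {k ι ι' : Type*} [Ring k] {p : ι → ι' → k}
    (hp : AffineIndependent k p) : LinearIndependent k fun i => Option.elim' 1 (p i) := by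
  rw [linearIndependent_iff']
  intro s g hg
  refine hp.eq_zero_of_sum_eq_zero ?_ ?_
  · simpa using congrFun hg none
  · funext j
    simpa using congrFun hg (some j)

theorem mem_span_of_algebraMap_comp_mem_span {K L ι ι' : Type*} [Field K] [Field L]
    [Algebra K L] [Finite ι'] {v : ι → ι' → K} (hv : LinearIndependent K v) {b : ι' → K}
    (hb : algebraMap K L ∘ b ∈ span L (range fun i => algebraMap K L ∘ v i)) :
    b ∈ span K (range v) := by
  by_contra hbv
  have hL := (linearIndependent_algebraMap_comp_iff (S := L)).mpr (hv.option hbv)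
  have hcomm : (fun o : Option ι => algebraMap K L ∘ o.casesOn' b v) =
      fun o => o.casesOn' (algebraMap K L ∘ b) fun i => algebraMap K L ∘ v i := by
    funext o; cases o <;> rfl
  rw [hcomm] at hL
  exact (linearIndependent_option'.mp hL).2 hb

theorem AffineIndependent.exists_algebraMap_eq_weights {K L ι ι' : Type*} [Field K] [Field L]
    [Algebra K L] [Fintype ι] [Finite ι'] {p : ι → ι' → K} {x : ι' → K}
    (hp : AffineIndependent L fun i => algebraMap K L ∘ p i) {w : ι → L} (hw₁ : ∑ i, w i = 1)
    (hwx : ∑ i, w i • (algebraMap K L ∘ p i) = algebraMap K L ∘ x) :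
    ∃ u : ι → K, (∀ i, algebraMap K L (u i) = w i) ∧ ∑ i, u i = 1 ∧ ∑ i, u i • p i = x := by
  have hlift (q : ι' → K) :
      algebraMap K L ∘ Option.elim' 1 q = Option.elim' 1 (algebraMap K L ∘ q) := by
    funext o; cases o <;> simp
  have hv : LinearIndependent K fun i => Option.elim' 1 (p i) := by
    rw [← linearIndependent_algebraMap_comp_iff (S := L)]
    simpa only [hlift] using hp.linearIndependent_elim'
  have hx : Option.elim' 1 x ∈ span K (range fun i => Option.elim' 1 (p i)) := by
    refine mem_span_of_algebraMap_comp_mem_span hv (L := L) ?_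
    rw [mem_span_range_iff_exists_fun]
    refine ⟨w, ?_⟩
    simp only [hlift]
    funext o
    cases o
    · simp [Finset.sum_apply, hw₁]
    · simp [Finset.sum_apply, ← hwx]
  obtain ⟨u, hu⟩ := (mem_span_range_iff_exists_fun K).mp hx
  have hu₁ : ∑ i, u i = 1 := by simpa using congrFun hu none
  have hux : ∑ i, u i • p i = x := by funext j; simpa using congrFun hu (some j)
  refine ⟨u, fun i => ?_, hu₁, hux⟩
  refine hp.eq_of_sum_eq_sum (s := univ) (w₁ := fun i => algebraMap K L (u i)) ?_ ?_ i
    (mem_univ i)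
  · simp [← map_sum, hu₁, hw₁]
  · rw [hwx, ← hux]; funext j; simp [Finset.sum_apply, Algebra.smul_def]

theorem exists_sum_smul_eq_sum_smul_comp {R M ι κ : Type*} [Semiring R] [PartialOrder R]
    [IsOrderedAddMonoid R] [AddCommMonoid M] [Module R M] [Fintype ι] [Fintype κ]
    [DecidableEq κ] (c : ι → κ) {u : ι → R} (hu : ∀ i, 0 ≤ u i) (a : κ → M) :
    ∃ lam : κ → R, (∀ k, 0 ≤ lam k) ∧ ∑ k, lam k = ∑ i, u i ∧
      ∑ k, lam k • a k = ∑ i, u i • a (c i) := by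
  refine ⟨fun k => ∑ i with c i = k, u i, fun k => sum_nonneg fun i _ => hu i,
    sum_fiberwise univ c u, ?_⟩
  rw [← sum_fiberwise univ c fun i => u i • a (c i)]
  refine sum_congr rfl fun k _ => ?_
  rw [sum_smul]
  exact sum_congr rfl fun i hi => by rw [(mem_filter.mp hi).2]

/-- A rational point in the real convex hull of finitely many rational points is a
convex combination of them with rational coefficients. -/
theorem rational_point_in_real_convexHull_rational_coeffs
    {d m : ℕ} (a : Fin m → (Fin d → ℚ)) (x : Fin d → ℚ)
    (h : (fun j => (x j : ℝ)) ∈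
      convexHull ℝ {p : Fin d → ℝ | ∃ k : Fin m, p = fun j => (a k j : ℝ)}) :
    ∃ lam : Fin m → ℚ, (∀ k, 0 ≤ lam k) ∧ ∑ k, lam k = 1 ∧ ∑ k, lam k • a k = x := by
  obtain ⟨ι, _, z, w, hz, hz_indep, hw₀, hw₁, hwx⟩ := eq_pos_convex_span_of_mem_convexHull h
  choose c hc using fun i => hz (mem_range_self i)
  have hz_cast : z = fun i => algebraMap ℚ ℝ ∘ a (c i) := by
    funext i j; simp [hc i]
  subst hz_cast
  obtain ⟨u, huw, hu₁, hux⟩ := hz_indep.exists_algebraMap_eq_weights hw₁ hwx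
  have hu₀ (i : ι) : 0 ≤ u i := by
    simpa [← huw i] using (hw₀ i).le
  obtain ⟨lam, hlam₀, hlam₁, hlamx⟩ := exists_sum_smul_eq_sum_smul_comp c hu₀ a
  exact ⟨lam, hlam₀, hlam₁.trans hu₁, hlamx.trans hux⟩
end

section
/- Let X be a finite-dimensional real normed space whose closed unit ball is the absolutely convex hull of finitely many points. If Y is a linear subspace of X, then the closed unit ball of Y (with the restricted norm) is also the absolutely convex hull of finitely many points of Y. -/
/-!
Write `A = F ∪ -F`, so that the unit ball `K` of `Y` is the preimage of `convexHull A` under the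
inclusion. An extreme point `x` of `K` is a convex combination with positive weights of some
`s ⊆ A`, and it is then the only point of `K` in `convexHull s`: from any other such point `y`
the segment `[y, x]` can be prolonged beyond `x` inside `convexHull s ∩ Y`, which would put `x`
inside an open segment of `K`. Hence `K` has at most `2 ^ |A|` extreme points, and by
Krein–Milman it is their convex hull; as `K` is symmetric, it is also the hull of `G ∪ -G`.
-/

open Set AffineMap

section PositiveCombination

variable {𝕜 E F : Type*} [Field 𝕜] [LinearOrder 𝕜] [IsStrictOrderedRing 𝕜]
  [AddCommGroup E] [Module 𝕜 E] [AddCommGroup F] [Module 𝕜 F]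

variable (𝕜) in
def IsPosConvexCombination (s : Finset E) (x : E) : Prop :=
  ∃ w : E → 𝕜, (∀ a ∈ s, 0 < w a) ∧ ∑ a ∈ s, w a = 1 ∧ ∑ a ∈ s, w a • a = x

lemma IsPosConvexCombination.mem_convexHull {s : Finset E} {x : E}
    (hx : IsPosConvexCombination 𝕜 s x) : x ∈ convexHull 𝕜 (s : Set E) :=
  let ⟨w, hw₀, hw₁, hwx⟩ := hx
  Finset.mem_convexHull'.2 ⟨w, fun a ha ↦ (hw₀ a ha).le, hw₁, hwx⟩

lemma exists_subset_isPosConvexCombination {A : Finset E} {x : E}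
    (hx : x ∈ convexHull 𝕜 (A : Set E)) : ∃ s ⊆ A, IsPosConvexCombination 𝕜 s x := by
  classical
  obtain ⟨w, hw₀, hw₁, hwx⟩ := Finset.mem_convexHull'.1 hx
  have hsupp : ∀ a ∈ A, w a ≠ 0 → 0 < w a := fun a ha h ↦ (hw₀ a ha).lt_of_ne' h
  refine ⟨A.filter (fun a ↦ 0 < w a), Finset.filter_subset _ _, w,
    fun a ha ↦ (Finset.mem_filter.1 ha).2, ?_, ?_⟩
  · rwa [Finset.sum_filter_of_ne hsupp]
  · rwa [Finset.sum_filter_of_ne fun a ha h ↦ hsupp a ha fun h0 ↦ h (by rw [h0, zero_smul])]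

lemma IsPosConvexCombination.exists_lineMap_mem_convexHull {s : Finset E} {x y : E}
    (hx : IsPosConvexCombination 𝕜 s x) (hy : y ∈ convexHull 𝕜 (s : Set E)) :
    ∃ t : 𝕜, 1 < t ∧ lineMap y x t ∈ convexHull 𝕜 (s : Set E) := by
  obtain ⟨w, hw₀, hw₁, rfl⟩ := hx
  obtain ⟨v, hv₀, hv₁, rfl⟩ := Finset.mem_convexHull'.1 hy
  have hs : s.Nonempty := Finset.nonempty_of_sum_ne_zero (by rw [hw₁]; exact one_ne_zero)
  set ε := s.inf' hs w
  have hε : 0 < ε := (Finset.lt_inf'_iff hs).2 hw₀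
  have hv_le : ∀ a ∈ s, v a ≤ 1 := fun a ha ↦
    hv₁ ▸ Finset.single_le_sum (fun b hb ↦ hv₀ b hb) ha
  refine ⟨1 + ε, by linarith, Finset.mem_convexHull'.2
    ⟨fun a ↦ (1 + ε) * w a - ε * v a, fun a ha ↦ ?_, ?_, ?_⟩⟩
  · have hεw : ε ≤ w a := Finset.inf'_le _ ha
    nlinarith [hw₀ a ha, hv_le a ha]
  · simp only [Finset.sum_sub_distrib, ← Finset.mul_sum, hw₁, hv₁]
    ring
  · simp only [lineMap_apply_module, sub_smul, mul_smul, Finset.sum_sub_distrib,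
      ← Finset.smul_sum]
    module

lemma IsPosConvexCombination.eq_of_mem_extremePoints {A s : Finset E} (f : F →ᵃ[𝕜] E)
    {x y : F} (hxA : x ∈ (f ⁻¹' convexHull 𝕜 (A : Set E)).extremePoints 𝕜) (hsA : s ⊆ A)
    (hx : IsPosConvexCombination 𝕜 s (f x)) (hy : f y ∈ convexHull 𝕜 (s : Set E)) : y = x := by
  obtain ⟨t, ht, hmem⟩ := hx.exists_lineMap_mem_convexHull hy
  have hsub : convexHull 𝕜 (s : Set E) ⊆ convexHull 𝕜 (A : Set E) :=
    convexHull_mono (by exact_mod_cast hsA)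
  have hq : lineMap y x t ∈ f ⁻¹' convexHull 𝕜 (A : Set E) := by
    rw [mem_preimage, f.apply_lineMap]
    exact hsub hmem
  have hseg : x ∈ openSegment 𝕜 y (lineMap y x t) := by
    have ht₀ : (0 : 𝕜) < t := by linarith
    rw [openSegment_eq_image_lineMap]
    refine ⟨t⁻¹, ⟨inv_pos.2 ht₀, inv_lt_one_of_one_lt₀ ht⟩, ?_⟩
    rw [lineMap_lineMap_right, inv_mul_cancel₀ ht₀.ne', lineMap_apply_one]
  exact hxA.2 (hsub hy) hq hseg

theorem finite_extremePoints_preimage_convexHull (f : F →ᵃ[𝕜] E) {A : Set E} (hA : A.Finite) :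
    ((f ⁻¹' convexHull 𝕜 A).extremePoints 𝕜).Finite := by
  obtain ⟨A, rfl⟩ := hA.exists_finset_coe
  have hsupp : ∀ x ∈ (f ⁻¹' convexHull 𝕜 (A : Set E)).extremePoints 𝕜,
      ∃ s ⊆ A, IsPosConvexCombination 𝕜 s (f x) := fun x hx ↦
    exists_subset_isPosConvexCombination (extremePoints_subset hx : x ∈ f ⁻¹' _)
  choose! supp hsuppA hsupp using hsupp
  refine Finite.of_injOn (t := A.powerset) (f := supp) (fun x hx ↦ ?_) (fun x hx y hy hxy ↦ ?_)
    (Finset.finite_toSet _)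
  · simpa using hsuppA x hx
  · exact (hsupp y hy).eq_of_mem_extremePoints f hy (hsuppA y hy)
      (hxy ▸ (hsupp x hx).mem_convexHull)

end PositiveCombination

lemma convexHull_union_eq_left {𝕜 E : Type*} [Field 𝕜] [LinearOrder 𝕜] [IsStrictOrderedRing 𝕜]
    [AddCommGroup E] [Module 𝕜 E] {s t : Set E} (ht : t ⊆ convexHull 𝕜 s) :
    convexHull 𝕜 (s ∪ t) = convexHull 𝕜 s :=
  (convexHull_min (union_subset (subset_convexHull 𝕜 s) ht) (convex_convexHull 𝕜 s)).antisymm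
    (convexHull_mono subset_union_left)

/-- Polyhedrality passes to subspaces: if the closed unit ball of a finite-dimensional real
normed space is the absolutely convex hull of a finite set, the same holds for the closed
unit ball of any linear subspace. -/
theorem polyhedral_subspace
    {X : Type*} [NormedAddCommGroup X] [NormedSpace ℝ X] [FiniteDimensional ℝ X]
    (hX : ∃ F : Set X, F.Finite ∧ Metric.closedBall (0 : X) 1 = convexHull ℝ (F ∪ -F))
    (Y : Submodule ℝ X) :
    ∃ G : Set Y, G.Finite ∧ Metric.closedBall (0 : Y) 1 = convexHull ℝ (G ∪ -G) := by
  obtain ⟨F, hF, hball⟩ := hX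
  have hballY : Metric.closedBall (0 : Y) 1 =
      Y.subtype.toAffineMap ⁻¹' convexHull ℝ (F ∪ -F) := by
    ext y
    simp [← hball]
  set G := (Metric.closedBall (0 : Y) 1).extremePoints ℝ
  have hG : G.Finite := by
    unfold G
    rw [hballY]
    exact finite_extremePoints_preimage_convexHull _ (hF.union hF.neg)
  have hGhull : convexHull ℝ G = Metric.closedBall 0 1 := by
    rw [← (hG.isClosed_convexHull (𝕜 := ℝ)).closure_eq]
    exact closure_convexHull_extremePoints (isCompact_closedBall 0 1) (convex_closedBall 0 1)
  refine ⟨G, hG, (convexHull_union_eq_left ?_).trans hGhull |>.symm⟩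
  rw [hGhull]
  intro y hy
  simpa using extremePoints_subset (Set.mem_neg.1 hy)
end

section
/- Let C = ℚ² with the norm ‖(x,y)‖ = |x| + |y|, let A = {(t,0) : t ∈ ℚ}, B = {(t,t) : t ∈ ℚ}, and f : A → B defined by f(t,0) = (t/2, t/2). Then there is no finite-dimensional normed space D over ℚ with polyhedral norm containing C isometrically, together with a surjective linear isometry g : D → D extending f. -/
/-!
Write `h` for the inverse of `g`, `e₁ = ι (1, 0)` and `e₂ = ι (0, 1)`. Then `h (e₁ + e₂) = 2 • e₁`,
so the orbits `yₙ = hⁿ e₁`, `zₙ = hⁿ e₂` satisfy `yₙ₊₁ + zₙ₊₁ = 2 • yₙ`, with `‖yₙ‖ = ‖zₙ‖ = 1` and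
`‖yₙ - zₙ‖ = 2`. A polyhedral norm is attained by one of finitely many functionals `uᵢ`, so some `uᵢ`
has `|uᵢ (yₙ - zₙ)| = 2` for two indices `k < l`. But `|uᵢ (yₖ - zₖ)| = 2` forces `uᵢ yₖ = ±1`, and
the recurrence then freezes both `uᵢ yₙ` and `uᵢ zₙ` at that value for all `n > k`, so
`uᵢ (yₗ - zₗ) = 0`.
-/

section BoundedRecurrence

variable {K : Type*} [Field K] [LinearOrder K] [IsStrictOrderedRing K]

theorem abs_eq_one_of_abs_sub_eq_two {x y : K} (hx : |x| ≤ 1) (hy : |y| ≤ 1)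
    (h : |x - y| = 2) : |x| = 1 :=
  le_antisymm hx (by linarith [abs_sub x y])

theorem eq_and_eq_of_add_eq_two_mul {x y c : K} (hx : |x| ≤ 1) (hy : |y| ≤ 1) (hc : |c| = 1)
    (h : x + y = 2 * c) : x = c ∧ y = c := by
  obtain ⟨hx₁, hx₂⟩ := abs_le.mp hx
  obtain ⟨hy₁, hy₂⟩ := abs_le.mp hy
  rcases (abs_eq zero_le_one).mp hc with rfl | rfl <;> constructor <;> linarith

theorem eq_of_abs_sub_eq_two_of_lt {a b : ℕ → K} (ha : ∀ n, |a n| ≤ 1) (hb : ∀ n, |b n| ≤ 1)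
    (hab : ∀ n, a (n + 1) + b (n + 1) = 2 * a n) {k l : ℕ} (hk : |a k - b k| = 2)
    (hkl : k < l) : a l = b l := by
  have hc := abs_eq_one_of_abs_sub_eq_two (ha k) (hb k) hk
  have hfreeze : ∀ n, k ≤ n → a (n + 1) = a k ∧ b (n + 1) = a k := by
    intro n hn
    induction n, hn using Nat.le_induction with
    | base => exact eq_and_eq_of_add_eq_two_mul (ha _) (hb _) hc (hab k)
    | succ n _ ih => exact eq_and_eq_of_add_eq_two_mul (ha _) (hb _) hc (by rw [hab, ih.1])
  obtain ⟨n, hn, rfl⟩ : ∃ n, k ≤ n ∧ l = n + 1 := ⟨l - 1, by omega, by omega⟩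
  rw [(hfreeze n hn).1, (hfreeze n hn).2]

end BoundedRecurrence

section PolyhedralNorm

variable {D : Type*} [SeminormedAddCommGroup D] [Module ℚ D] {ι : Type*} [Fintype ι] [Nonempty ι]

def IsPolyhedralNormBy (u : ι → D →ₗ[ℚ] ℚ) : Prop :=
  ∀ x : D, ‖x‖ = ((Finset.univ.sup' Finset.univ_nonempty fun i => |u i x| : ℚ) : ℝ)

namespace IsPolyhedralNormBy

variable {u : ι → D →ₗ[ℚ] ℚ}

theorem sup'_abs_eq_of_norm_eq (hu : IsPolyhedralNormBy u) {x : D} {c : ℚ} (hx : ‖x‖ = c) :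
    Finset.univ.sup' Finset.univ_nonempty (fun i => |u i x|) = c := by
  exact_mod_cast (hu x).symm.trans hx

theorem abs_apply_le (hu : IsPolyhedralNormBy u) {x : D} {c : ℚ} (hx : ‖x‖ = c) (i : ι) :
    |u i x| ≤ c :=
  hu.sup'_abs_eq_of_norm_eq hx ▸ Finset.le_sup' (fun i => |u i x|) (Finset.mem_univ i)

theorem exists_abs_apply_eq (hu : IsPolyhedralNormBy u) {x : D} {c : ℚ} (hx : ‖x‖ = c) :
    ∃ i, |u i x| = c := by
  obtain ⟨i, -, hi⟩ := Finset.exists_mem_eq_sup' Finset.univ_nonempty (fun i => |u i x|)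
  exact ⟨i, hi ▸ hu.sup'_abs_eq_of_norm_eq hx⟩

theorem map_add_ne_two_smul (hu : IsPolyhedralNormBy u) (h : D →ₗᵢ[ℚ] D) {e₁ e₂ : D}
    (h₁ : ‖e₁‖ = 1) (h₂ : ‖e₂‖ = 1) (h₁₂ : ‖e₁ - e₂‖ = 2) : h (e₁ + e₂) ≠ (2 : ℚ) • e₁ := by
  intro hh
  set y : ℕ → D := fun n => (h ^ n) e₁
  set z : ℕ → D := fun n => (h ^ n) e₂
  have hyz : ∀ n, y (n + 1) + z (n + 1) = (2 : ℚ) • y n := by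
    intro n
    simp only [y, z, pow_succ, LinearIsometry.coe_mul, Function.comp_apply, ← map_add, hh, map_smul]
  have hattained : ∀ n, ∃ i, |u i (y n - z n)| = 2 := fun n =>
    hu.exists_abs_apply_eq (by simp only [y, z, ← map_sub, LinearIsometry.norm_map, h₁₂]; norm_num)
  choose i hi using hattained
  obtain ⟨k, l, hkl, hik⟩ :=
    Set.finite_univ.exists_lt_map_eq_of_forall_mem (fun n => Set.mem_univ (i n))
  have hl : u (i k) (y l) = u (i k) (z l) :=
    eq_of_abs_sub_eq_two_of_lt (a := fun n => u (i k) (y n)) (b := fun n => u (i k) (z n))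
      (fun n => hu.abs_apply_le (by simp only [y, LinearIsometry.norm_map, h₁]; norm_num) _)
      (fun n => hu.abs_apply_le (by simp only [z, LinearIsometry.norm_map, h₂]; norm_num) _)
      (fun n => by simp only [← map_add, hyz, map_smul, smul_eq_mul])
      (by simpa only [map_sub] using hi k) hkl
  have := hi l
  rw [← hik, map_sub, hl, sub_self, abs_zero] at this
  norm_num at this

end IsPolyhedralNormBy

end PolyhedralNorm

theorem no_polyhedral_extension_of_partial_isometry_general
    {D : Type*} [NormedAddCommGroup D] [NormedSpace ℚ D]
    (hpoly : ∃ (m : ℕ) (u : Fin (m + 1) → (D →ₗ[ℚ] ℚ)),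
      ∀ x : D, ‖x‖ = ((Finset.univ.sup' Finset.univ_nonempty fun i => |u i x| : ℚ) : ℝ))
    (ι : (ℚ × ℚ) →ₗ[ℚ] D)
    (hι : ∀ p : ℚ × ℚ, ‖ι p‖ = ((|p.1| + |p.2| : ℚ) : ℝ))
    (g : D →ₗ[ℚ] D) (hg_iso : ∀ x, ‖g x‖ = ‖x‖) (hg_surj : Function.Surjective g)
    (hg_ext : ∀ t : ℚ, g (ι (t, 0)) = ι (t / 2, t / 2)) :
    False := by
  obtain ⟨m, u, hu⟩ := hpoly
  let E : D ≃ₗᵢ[ℚ] D := LinearIsometryEquiv.ofSurjective ⟨g, hg_iso⟩ hg_surj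
  have hE : E ((2 : ℚ) • ι (1, 0)) = ι (1, 0) + ι (0, 1) := by
    change g _ = _
    rw [map_smul, hg_ext, ← map_smul, ← map_add]
    norm_num
  refine IsPolyhedralNormBy.map_add_ne_two_smul (u := u) hu E.symm.toLinearIsometry
    (e₁ := ι (1, 0)) (e₂ := ι (0, 1)) (by rw [hι]; norm_num) (by rw [hι]; norm_num)
    (by rw [← map_sub, hι]; norm_num) ?_
  rw [← hE]
  exact E.symm_apply_apply _

/-- Failure of the 1-Hrushovski property for rational polyhedral spaces:
for `C = ℚ²` with the ℓ¹-norm, `A = {(t,0)}`, `B = {(t,t)}` and the partial isometry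
`f(t,0) = (t/2, t/2)`, there is no finite-dimensional rational polyhedral normed space `D`
containing `C` isometrically together with a surjective linear isometry `g` extending `f`. -/
theorem no_polyhedral_extension_of_partial_isometry
    {D : Type*} [NormedAddCommGroup D] [NormedSpace ℚ D] [FiniteDimensional ℚ D]
    (hpoly : ∃ (m : ℕ) (u : Fin (m + 1) → (D →ₗ[ℚ] ℚ)),
      ∀ x : D, ‖x‖ = ((Finset.univ.sup' Finset.univ_nonempty fun i => |u i x| : ℚ) : ℝ))
    (ι : (ℚ × ℚ) →ₗ[ℚ] D)
    (hι : ∀ p : ℚ × ℚ, ‖ι p‖ = ((|p.1| + |p.2| : ℚ) : ℝ))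
    (g : D →ₗ[ℚ] D) (hg_iso : ∀ x, ‖g x‖ = ‖x‖) (hg_surj : Function.Surjective g)
    (hg_ext : ∀ t : ℚ, g (ι (t, 0)) = ι (t / 2, t / 2)) :
    False :=
  no_polyhedral_extension_of_partial_isometry_general hpoly ι hι g hg_iso hg_surj hg_ext
end

section
/- Let D be a normed space, g : D → D a surjective linear isometry with g^n = id for some n ≥ 1, and let a₀, ..., a_{n-1} ∈ D satisfy ‖a₀ − g(a_{n-1})‖ = 1 and ‖a_{i+1} − g(a_i)‖ = 2^{-(i+1)} for 0 ≤ i ≤ n−2. Then 1 ≤ 1 − 2^{-(n-1)}, a contradiction; i.e., no such data exist. -/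
/-! Transport every point to the last index by iterates of `g`: the distance from `g^[n-1] a₀`
to `a_{n-1}` telescopes into the steps `‖a_{i+1} - g aᵢ‖`, which sum to `1 - 2^{-(n-1)} < 1`,
while `g^n = id` makes that distance `‖a₀ - g a_{n-1}‖ = 1`. -/

open Finset

theorem Isometry.dist_iterate_le_sum_dist {X : Type*} [PseudoMetricSpace X] {f : X → X}
    (hf : Isometry f) (a : ℕ → X) (m : ℕ) :
    dist (f^[m] (a 0)) (a m) ≤ ∑ i ∈ range m, dist (f (a i)) (a (i + 1)) := by
  induction m with
  | zero => simp
  | succ m ih =>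
    calc dist (f^[m + 1] (a 0)) (a (m + 1))
        ≤ dist (f (f^[m] (a 0))) (f (a m)) + dist (f (a m)) (a (m + 1)) := by
          rw [Function.iterate_succ_apply']
          exact dist_triangle _ _ _
      _ = dist (f^[m] (a 0)) (a m) + dist (f (a m)) (a (m + 1)) := by rw [hf.dist_eq]
      _ ≤ ∑ i ∈ range (m + 1), dist (f (a i)) (a (i + 1)) := by
          rw [sum_range_succ]
          gcongr

theorem sum_range_half_pow_succ (m : ℕ) :
    ∑ i ∈ range m, (1 / 2 : ℝ) ^ (i + 1) = 1 - (1 / 2) ^ m := by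
  induction m with
  | zero => simp
  | succ m ih => rw [sum_range_succ, ih]; ring

theorem telescoping_contradiction_general
    {D : Type*} [NormedAddCommGroup D] [NormedSpace ℝ D]
    (g : D →ₗ[ℝ] D) (hg_iso : ∀ x, ‖g x‖ = ‖x‖)
    (n : ℕ) (hn : 1 ≤ n) (hgn : ∀ x, (⇑g)^[n] x = x)
    (a : ℕ → D)
    (h1 : ‖a 0 - g (a (n - 1))‖ = 1)
    (h2 : ∀ i, i < n - 1 → ‖a (i + 1) - g (a i)‖ = (1 / 2 : ℝ) ^ (i + 1)) :
    False := by
  have hg : Isometry g := AddMonoidHomClass.isometry_of_norm g hg_iso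
  have h_start : dist ((⇑g)^[n - 1] (a 0)) (a (n - 1)) = 1 := by
    rw [← hg.dist_eq, ← Function.iterate_succ_apply' (⇑g), Nat.succ_eq_add_one, Nat.sub_add_cancel hn, hgn,
      dist_eq_norm, h1]
  have h_steps : ∑ i ∈ range (n - 1), dist (g (a i)) (a (i + 1)) = 1 - (1 / 2) ^ (n - 1) := by
    rw [← sum_range_half_pow_succ]
    refine sum_congr rfl fun i hi => ?_
    rw [dist_comm, dist_eq_norm, h2 i (mem_range.mp hi)]
  have := hg.dist_iterate_le_sum_dist a (n - 1)
  rw [h_start, h_steps] at this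
  have : (0 : ℝ) < (1 / 2) ^ (n - 1) := by positivity
  linarith

/-- The telescoping argument: there is no finite-order surjective linear isometry `g`
together with points `a₀, …, a_{n-1}` with `‖a₀ - g a_{n-1}‖ = 1` and
`‖a_{i+1} - g a_i‖ = 2^{-(i+1)}`. -/
theorem telescoping_contradiction
    {D : Type*} [NormedAddCommGroup D] [NormedSpace ℝ D]
    (g : D →ₗ[ℝ] D) (hg_iso : ∀ x, ‖g x‖ = ‖x‖) (hg_surj : Function.Surjective g)
    (n : ℕ) (hn : 1 ≤ n) (hgn : ∀ x, (⇑g)^[n] x = x)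
    (a : ℕ → D)
    (h1 : ‖a 0 - g (a (n - 1))‖ = 1)
    (h2 : ∀ i, i < n - 1 → ‖a (i + 1) - g (a i)‖ = (1 / 2 : ℝ) ^ (i + 1)) :
    False :=
  telescoping_contradiction_general g hg_iso n hn hgn a h1 h2
end

section
/- Let E be a normed space, g : E → E a surjective linear isometry with g^n = id_E, and let A ⊆ E be a linear subspace with f := g restricted to A. Then for any a₀, ..., a_{n-1} ∈ A: ‖a₀ − f(a_{n-1})‖ ≤ Σ_{i=0}^{n-2} ‖a_{i+1} − f(a_i)‖. -/
/-!
Telescoping through the points `g^[n-i] (aᵢ)`: consecutive ones are at distance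
`dist (aᵢ₊₁) (g aᵢ)` because `g` is an isometry, and the endpoints are `g^[n] a₀ = a₀` and
`g aₙ₋₁`, so the triangle inequality along the chain gives the cyclic inequality.
-/

open Finset

theorem Isometry.dist_iterate_succ_le_sum {α : Type*} [PseudoMetricSpace α] {g : α → α}
    (hg : Isometry g) (a : ℕ → α) (m : ℕ) :
    dist (g^[m + 1] (a 0)) (g (a m)) ≤ ∑ i ∈ range m, dist (a (i + 1)) (g (a i)) := by
  induction m with
  | zero => simp
  | succ m ih =>
    calc dist (g^[m + 2] (a 0)) (g (a (m + 1)))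
        ≤ dist (g^[m + 2] (a 0)) (g (g (a m))) + dist (g (g (a m))) (g (a (m + 1))) :=
          dist_triangle _ _ _
      _ = dist (g^[m + 1] (a 0)) (g (a m)) + dist (a (m + 1)) (g (a m)) := by
          rw [Function.iterate_succ_apply', hg.dist_eq, hg.dist_eq, dist_comm (g (a m))]
      _ ≤ ∑ i ∈ range (m + 1), dist (a (i + 1)) (g (a i)) := by
          rw [sum_range_succ]
          gcongr

theorem cyclic_inequality_of_finite_order_extension_general
    {E : Type*} [NormedAddCommGroup E] [NormedSpace ℝ E]
    (g : E →ₗ[ℝ] E) (hg_iso : ∀ x, ‖g x‖ = ‖x‖)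
    (n : ℕ) (hn : 1 ≤ n) (hgn : ∀ x, (⇑g)^[n] x = x)
    (a : ℕ → E) :
    ‖a 0 - g (a (n - 1))‖ ≤ ∑ i ∈ Finset.range (n - 1), ‖a (i + 1) - g (a i)‖ := by
  obtain ⟨m, rfl⟩ := Nat.exists_eq_add_of_le' hn
  have hg : Isometry g := AddMonoidHomClass.isometry_of_norm g hg_iso
  simpa [dist_eq_norm, hgn] using hg.dist_iterate_succ_le_sum a m

/-- If a partial isometry `f = g|_A` extends to a surjective linear isometry `g` of finite
order `n`, then the cyclic inequality
`‖a₀ - f(a_{n-1})‖ ≤ Σ_{i=0}^{n-2} ‖a_{i+1} - f(a_i)‖` holds for all `a₀, …, a_{n-1} ∈ A`. -/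
theorem cyclic_inequality_of_finite_order_extension
    {E : Type*} [NormedAddCommGroup E] [NormedSpace ℝ E]
    (g : E →ₗ[ℝ] E) (hg_iso : ∀ x, ‖g x‖ = ‖x‖) (hg_surj : Function.Surjective g)
    (n : ℕ) (hn : 1 ≤ n) (hgn : ∀ x, (⇑g)^[n] x = x)
    (A : Submodule ℝ E) (a : ℕ → E) (ha : ∀ i, a i ∈ A) :
    ‖a 0 - g (a (n - 1))‖ ≤ ∑ i ∈ Finset.range (n - 1), ‖a (i + 1) - g (a i)‖ :=
  cyclic_inequality_of_finite_order_extension_general g hg_iso n hn hgn a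
end

section
/- Let C = ℚ² with norm ‖(x,y)‖ = |x|+|y|, A = {(t,0) : t ∈ ℚ}, and f(t,0) = (t/2, t/2). Then for every n ∈ ℕ, n ≥ 1, there exist a₀, ..., a_{n-1} ∈ A such that ‖a₀ − f(a_{n-1})‖ > Σ_{i=0}^{n-2} ‖a_{i+1} − f(a_i)‖. -/
/-! Take `aᵢ = (2⁻ⁱ, 0)`. Each link `a_{i+1} - f(aᵢ) = (0, -2^{-(i+1)})` of the chain has norm
`2^{-(i+1)}`, so the chain has total length `1 - 2^{-(n-1)} < 1`, whereas the closing link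
`a₀ - f(a_{n-1}) = (1 - 2⁻ⁿ, -2⁻ⁿ)` has norm exactly `1`. -/

open Finset

lemma sum_range_inv_two_pow_succ {K : Type*} [Field K] [NeZero (2 : K)] (m : ℕ) :
    ∑ i ∈ range m, (2⁻¹ : K) ^ (i + 1) = 1 - 2⁻¹ ^ m := by
  calc ∑ i ∈ range m, (2⁻¹ : K) ^ (i + 1)
      = (1 - 2⁻¹) * ∑ i ∈ range m, (2⁻¹ : K) ^ i := by
        rw [mul_sum, ← one_div, sub_half]
        simp_rw [pow_succ']
    _ = 1 - 2⁻¹ ^ m := mul_neg_geom_sum _ m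

section LinearOrderedField

variable {K : Type*} [Field K] [LinearOrder K] [IsStrictOrderedRing K]

lemma abs_half_sub_half_add_abs_zero_sub_half {t : K} (ht : 0 ≤ t) :
    |t / 2 - t / 2| + |0 - t / 2| = t / 2 := by
  rw [sub_self, abs_zero, zero_add, zero_sub, abs_neg, abs_of_nonneg (by positivity)]

lemma abs_one_sub_add_abs_zero_sub {t : K} (ht₀ : 0 ≤ t) (ht₁ : t ≤ 1) :
    |1 - t| + |0 - t| = 1 := by
  rw [zero_sub, abs_neg, abs_of_nonneg (sub_nonneg.2 ht₁), abs_of_nonneg ht₀, sub_add_cancel]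

end LinearOrderedField

/-- The example of Theorem 4.4 violates the cyclic inequality for every `n ≥ 1`:
for `C = ℚ²` with the ℓ¹-norm and `f(t,0) = (t/2, t/2)` on `A = {(t,0)}`,
there are `a₀, …, a_{n-1} ∈ A` with
`‖a₀ - f(a_{n-1})‖ > Σ_{i=0}^{n-2} ‖a_{i+1} - f(a_i)‖`. -/
theorem example_violates_cyclic_inequality :
    ∀ n : ℕ, 1 ≤ n →
      ∃ a : ℕ → ℚ × ℚ, (∀ i, (a i).2 = 0) ∧
        (let f : ℚ × ℚ → ℚ × ℚ := fun p => (p.1 / 2, p.1 / 2)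
         let nrm : ℚ × ℚ → ℚ := fun p => |p.1| + |p.2|
         nrm (a 0 - f (a (n - 1))) >
           ∑ i ∈ Finset.range (n - 1), nrm (a (i + 1) - f (a i))) := by
  intro n hn
  obtain ⟨m, rfl⟩ := Nat.exists_eq_add_of_le' hn
  refine ⟨fun i => (2⁻¹ ^ i, 0), fun _ => rfl, ?_⟩
  have half_pow_div_two (i : ℕ) : (2⁻¹ : ℚ) ^ i / 2 = 2⁻¹ ^ (i + 1) := by
    rw [pow_succ, div_eq_mul_inv]
  have chain_link (i : ℕ) :
      |(2⁻¹ : ℚ) ^ (i + 1) - 2⁻¹ ^ i / 2| + |0 - 2⁻¹ ^ i / 2| = 2⁻¹ ^ (i + 1) := by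
    rw [← half_pow_div_two, abs_half_sub_half_add_abs_zero_sub_half (by positivity)]
  have closing_link : |(2⁻¹ : ℚ) ^ 0 - 2⁻¹ ^ m / 2| + |0 - 2⁻¹ ^ m / 2| = 1 := by
    rw [pow_zero, half_pow_div_two,
      abs_one_sub_add_abs_zero_sub (by positivity) (pow_le_one₀ (by norm_num) (by norm_num))]
  simp only [Nat.add_sub_cancel, Prod.fst_sub, Prod.snd_sub, chain_link, closing_link,
    sum_range_inv_two_pow_succ]
  exact sub_lt_self 1 (by positivity)
end

section
/- Let C be a normed space over a field 𝔽 ∈ {ℚ, ℝ}, A, B ⊆ C subspaces, and f : A → B a surjective linear isometry. Suppose there is n ∈ ℕ such that for all a₀, ..., a_{n-1} ∈ A: ‖a₀ − f(a_{n-1})‖ ≤ Σ_{i=0}^{n-2} ‖a_{i+1} − f(a_i)‖. Let E₀ = C^n with the norm ‖(c₀,...,c_{n-1})‖ = Σ‖cᵢ‖, let N ⊆ E₀ be the subspace generated by all vectors of the form (0,...,0,a,−f(a),0,...,0) (a at coordinate i, −f(a) at coordinate i+1, for 0 ≤ i ≤ n−2) and (−f(a),0,...,0,a) for a ∈ A,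 and let E = E₀/N with the quotient norm. Then the map c ↦ (c,0,...,0) + N is an isometric embedding of C into E. -/
/-!
Every element of `N` is a cyclic defect `(a j - f (a (j - 1)))ⱼ` of a family `a` in `A`
(indices mod `n`). For such `u`, the ℓ¹-norm of `(c, 0, …, 0) + u` is
`‖c + (a 0 - f (a (n - 1)))‖ + ∑ ‖a (i + 1) - f (a i)‖`, and by the cyclic inequality the sum
dominates `‖a 0 - f (a (n - 1))‖`, so the triangle inequality bounds it below by `‖c‖`;
`u = 0` attains the bound.
-/

section Algebra

variable {R C : Type*} [Ring R] [AddCommGroup C] [Module R C] {A B : Submodule R C}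

def cyclicDefect (f : A →ₗ[R] B) (m : ℕ) : (Fin (m + 1) → A) →ₗ[R] Fin (m + 1) → C :=
  LinearMap.pi fun j => A.subtype ∘ₗ LinearMap.proj j - B.subtype ∘ₗ f ∘ₗ LinearMap.proj (j - 1)

variable (f : A →ₗ[R] B) {m : ℕ}

@[simp]
theorem cyclicDefect_apply (a : Fin (m + 1) → A) (j : Fin (m + 1)) :
    cyclicDefect f m a j = (a j : C) - f (a (j - 1)) :=
  rfl

theorem cyclicDefect_single (a : A) (i : Fin (m + 1)) :
    cyclicDefect f m (Pi.single i a) = Pi.single i (a : C) - Pi.single (i + 1) (f a : C) := by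
  ext j
  simp only [cyclicDefect_apply, Pi.sub_apply, Pi.single_apply, sub_eq_iff_eq_add]
  split_ifs <;> simp

theorem span_single_sub_single_le_range_cyclicDefect :
    Submodule.span R {v : Fin (m + 1) → C | ∃ (a : A) (i : Fin (m + 1)),
        v = Pi.single i (a : C) - Pi.single (i + 1) (f a : C)} ≤
      LinearMap.range (cyclicDefect f m) := by
  rw [Submodule.span_le]
  rintro v ⟨a, i, rfl⟩
  exact ⟨Pi.single i a, cyclicDefect_single f a i⟩

end Algebra

section Norm

variable {R C : Type*} [Ring R] [SeminormedAddCommGroup C] [Module R C] {A B : Submodule R C}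
  (f : A →ₗ[R] B) {m : ℕ}

theorem sum_norm_single_zero_add_cyclicDefect (c : C) (a : Fin (m + 1) → A) :
    ∑ j, ‖(Pi.single 0 c + cyclicDefect f m a : Fin (m + 1) → C) j‖ =
      ‖c + ((a 0 : C) - f (a (Fin.last m)))‖ +
        ∑ i : Fin m, ‖(a i.succ : C) - f (a i.castSucc)‖ := by
  have h0 : (0 : Fin (m + 1)) - 1 = Fin.last m := by ext; simp
  have hsucc (i : Fin m) : i.succ - 1 = i.castSucc := by ext; simp [Fin.coe_sub_one]
  simp [Fin.sum_univ_succ, h0, hsucc]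

theorem norm_le_sum_norm_single_zero_add_of_mem_range
    (hcyc : ∀ a : Fin (m + 1) → A, ‖(a 0 : C) - f (a (Fin.last m))‖ ≤
      ∑ i : Fin m, ‖(a i.succ : C) - f (a i.castSucc)‖)
    (c : C) {u : Fin (m + 1) → C} (hu : u ∈ LinearMap.range (cyclicDefect f m)) :
    ‖c‖ ≤ ∑ j, ‖(Pi.single 0 c + u : Fin (m + 1) → C) j‖ := by
  obtain ⟨a, rfl⟩ := hu
  rw [sum_norm_single_zero_add_cyclicDefect]
  calc ‖c‖ ≤ ‖c + ((a 0 : C) - f (a (Fin.last m)))‖ + ‖(a 0 : C) - f (a (Fin.last m))‖ :=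
        norm_le_add_norm_add _ _
    _ ≤ _ := add_le_add_right (hcyc a) _

end Norm

theorem cyclic_quotient_embedding_isometric_general
    {C : Type*} [NormedAddCommGroup C] [NormedSpace ℝ C]
    (A B : Submodule ℝ C) (f : A →ₗ[ℝ] B)
    (n : ℕ) (hn : 0 < n)
    (hineq : ∀ a : ℕ → A,
      ‖(a 0 : C) - ((f (a (n - 1)) : B) : C)‖ ≤
        ∑ i ∈ Finset.range (n - 1), ‖(a (i + 1) : C) - ((f (a i) : B) : C)‖)
    (N : Submodule ℝ (Fin n → C))
    (hN : N = Submodule.span ℝ {v : Fin n → C | ∃ (a : A) (i : Fin n),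
      v = Pi.single i (a : C) -
          Pi.single (⟨(i.val + 1) % n, Nat.mod_lt _ hn⟩ : Fin n) ((f a : C))}) :
    ∀ c : C,
      sInf {r : ℝ | ∃ u ∈ N,
        r = ∑ i, ‖((Pi.single (⟨0, hn⟩ : Fin n) c + u : Fin n → C)) i‖} = ‖c‖ := by
  obtain ⟨m, rfl⟩ := Nat.exists_eq_add_one_of_ne_zero hn.ne'
  have hsucc (i : Fin (m + 1)) :
      (⟨(i.val + 1) % (m + 1), Nat.mod_lt _ hn⟩ : Fin (m + 1)) = i + 1 := by
    ext; simp [Fin.val_add]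
  have hcyc (a : Fin (m + 1) → A) : ‖(a 0 : C) - f (a (Fin.last m))‖ ≤
      ∑ i : Fin m, ‖(a i.succ : C) - f (a i.castSucc)‖ := by
    have hlast : Fin.ofNat (m + 1) m = Fin.last m := by ext; simp
    have hsucc' (i : Fin m) : Fin.ofNat (m + 1) (i + 1) = i.succ := by ext; simp
    have hcast (i : Fin m) : Fin.ofNat (m + 1) i = i.castSucc := by ext; simp
    simpa only [add_tsub_cancel_right, Finset.sum_range, Function.comp_apply, Fin.ofNat_zero,
      hlast, hsucc', hcast] using hineq (a ∘ Fin.ofNat (m + 1))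
  intro c
  have hN' : N ≤ LinearMap.range (cyclicDefect f m) := by
    simpa only [hN, hsucc] using span_single_sub_single_le_range_cyclicDefect f
  refine IsLeast.csInf_eq ⟨⟨0, N.zero_mem, ?_⟩, ?_⟩
  · simp [Pi.single_apply, apply_ite]
  · rintro r ⟨u, hu, rfl⟩
    exact norm_le_sum_norm_single_zero_add_of_mem_range f hcyc c (hN' hu)

/-- (3) ⇒ (2) of Proposition 4.5, isometric-embedding part: given a partial isometry
`f : A → B` of `C` satisfying the cyclic inequality for some `n`, the canonical map
`c ↦ (c,0,…,0) + N` of `C` into the cyclic quotient `E = C^n/N` (with `C^n` carrying the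
ℓ¹-norm and `E` the quotient norm) is isometric. -/
theorem cyclic_quotient_embedding_isometric
    {C : Type*} [NormedAddCommGroup C] [NormedSpace ℝ C]
    (A B : Submodule ℝ C) (f : A →ₗ[ℝ] B)
    (hf_iso : ∀ a : A, ‖(f a : C)‖ = ‖(a : C)‖) (hf_surj : Function.Surjective f)
    (n : ℕ) (hn : 0 < n)
    (hineq : ∀ a : ℕ → A,
      ‖(a 0 : C) - ((f (a (n - 1)) : B) : C)‖ ≤
        ∑ i ∈ Finset.range (n - 1), ‖(a (i + 1) : C) - ((f (a i) : B) : C)‖)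
    (N : Submodule ℝ (Fin n → C))
    (hN : N = Submodule.span ℝ {v : Fin n → C | ∃ (a : A) (i : Fin n),
      v = Pi.single i (a : C) -
          Pi.single (⟨(i.val + 1) % n, Nat.mod_lt _ hn⟩ : Fin n) ((f a : C))}) :
    ∀ c : C,
      sInf {r : ℝ | ∃ u ∈ N,
        r = ∑ i, ‖((Pi.single (⟨0, hn⟩ : Fin n) c + u : Fin n → C)) i‖} = ‖c‖ :=
  cyclic_quotient_embedding_isometric_general A B f n hn hineq N hN
end

section
/- Let C₁ be a normed space, A₁, B₁ ⊆ C₁ subspaces, f₁ : A₁ → B₁ a surjective linear isometry. Let 𝔇 be the space of finitely supported functions α : ℤ → C₁ with norm ‖α‖ = Σ_k ‖α(k)‖, and let 𝔑 ⊆ 𝔇 be the subspace generated by vectors (…,0,−f₁(a),a,0,…) with a ∈ A₁ (where −f₁(a) is at coordinate k and a at coordinate k+1, any k). For integers k ≤ l, let 𝔇_{[k,l]} and 𝔑_{[k,l]} denote the elements of 𝔇 and 𝔑 supported in {k,...,l}. Then for every α ∈ 𝔇_{[k,l]}: inf{‖α + η‖ : η ∈ 𝔑} = inf{‖α + η‖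 : η ∈ 𝔑_{[k,l]}}. -/
/-!
Write a perturbation as `η = T b` with `T = linkMap f`, so `(T b) m = b (m - 1) - f (b m)`.
Cutting `b` down to `[k, l)` gives `η' ∈ 𝔑_{[k,l]}`, and on `[k, l]` the vector `α + η'` differs
from `α + η` only by `b (k - 1)` at `k` and by `f (b l)` at `l`. Since `f` is isometric, the
triangle inequality telescopes along the chain `‖b j‖ ≤ ‖(T b) j‖ + ‖b (j - 1)‖` (and its mirror
image), so `‖b (k - 1)‖` and `‖b l‖` are bounded by the mass of `α + η` below `k` and above `l`.
-/

section LinkMap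

open Finset

theorem Finsupp.exists_support_subset_Ioo {M : Type*} [Zero M] (b : ℤ →₀ M) (p₀ r₀ : ℤ) :
    ∃ p r, p ≤ p₀ ∧ r₀ ≤ r ∧ b.support ⊆ Ioo p r := by
  obtain ⟨p, hp⟩ := b.support.bddBelow
  obtain ⟨r, hr⟩ := b.support.bddAbove
  refine ⟨min p₀ (p - 1), max r₀ (r + 1), min_le_left _ _, le_max_left _ _, fun m hm ↦ ?_⟩
  have := hp hm
  have := hr hm
  rw [mem_Ioo]
  omega

variable {R C : Type*} [CommSemiring R]

section Algebraic

variable [AddCommGroup C] [Module R C] {A B : Submodule R C}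

noncomputable def linkMap (f : A →ₗ[R] B) : (ℤ →₀ A) →ₗ[R] (ℤ →₀ C) :=
  Finsupp.lsum R fun j ↦
    (Finsupp.lsingle (j + 1)).comp A.subtype - (Finsupp.lsingle j).comp (B.subtype.comp f)

theorem linkMap_single (f : A →ₗ[R] B) (j : ℤ) (a : A) :
    linkMap f (Finsupp.single j a) =
      Finsupp.single (j + 1) (a : C) - Finsupp.single j (f a : C) := by
  simp [linkMap]

theorem linkMap_apply (f : A →ₗ[R] B) (b : ℤ →₀ A) (m : ℤ) :
    linkMap f b m = (b (m - 1) : C) - f (b m) := by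
  induction b using Finsupp.induction_linear with
  | zero => simp
  | add b c hb hc => simp only [map_add, Finsupp.add_apply, hb, hc, Submodule.coe_add]; abel
  | single j a =>
    rw [linkMap_single]
    rcases eq_or_ne m j with rfl | hm
    · simp
    rcases eq_or_ne m (j + 1) with rfl | hm'
    · simp
    simp [hm.symm, hm'.symm, show j ≠ m - 1 by omega]

theorem range_linkMap (f : A →ₗ[R] B) :
    LinearMap.range (linkMap f) = Submodule.span R {v : ℤ →₀ C | ∃ (a : A) (k : ℤ),
      v = Finsupp.single (k + 1) (a : C) - Finsupp.single k ((f a : C))} := by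
  apply le_antisymm
  · rintro _ ⟨b, rfl⟩
    induction b using Finsupp.induction_linear with
    | zero => simp
    | add b c hb hc => rw [map_add]; exact add_mem hb hc
    | single j a => exact Submodule.subset_span ⟨a, j, linkMap_single f j a⟩
  · rw [Submodule.span_le]
    rintro _ ⟨a, j, rfl⟩
    exact ⟨Finsupp.single j a, linkMap_single f j a⟩

end Algebraic

section Normed

variable {ι E : Type*} [SeminormedAddCommGroup E]

noncomputable def l1Norm (ξ : ι →₀ E) : ℝ := ∑ i ∈ ξ.support, ‖ξ i‖

theorem l1Norm_eq_sum_of_support_subset {ξ : ι →₀ E} {s : Finset ι} (h : ξ.support ⊆ s) :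
    l1Norm ξ = ∑ i ∈ s, ‖ξ i‖ :=
  Finsupp.sum_of_support_subset ξ h _ fun _ _ ↦ norm_zero

theorem sum_norm_single_apply_of_mem {i : ι} {s : Finset ι} (hi : i ∈ s) (x : E) :
    ∑ m ∈ s, ‖Finsupp.single i x m‖ = ‖x‖ := by
  rw [sum_eq_single_of_mem i hi fun m _ hm ↦ by rw [Finsupp.single_eq_of_ne hm, norm_zero],
    Finsupp.single_eq_same]

variable [SeminormedAddCommGroup C] [Module R C] {A B : Submodule R C} {f : A →ₗ[R] B}

theorem norm_apply_le_sum_norm_linkMap_Ioc_left (hf : ∀ a : A, ‖(f a : C)‖ = ‖(a : C)‖)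
    (b : ℤ →₀ A) {p : ℤ} (hp : b p = 0) (j : ℤ) (hj : p ≤ j) :
    ‖(b j : C)‖ ≤ ∑ m ∈ Ioc p j, ‖linkMap f b m‖ := by
  induction j, hj using Int.leInduction with
  | base => simp [hp]
  | succ j hpj ih =>
    rw [← insert_Ioc_right_eq_Ioc_add_one hpj, sum_insert (by simp), linkMap_apply,
      add_sub_cancel_right]
    calc ‖(b (j + 1) : C)‖ = ‖(f (b (j + 1)) : C)‖ := (hf _).symm
      _ ≤ ‖(b j : C) - f (b (j + 1))‖ + ‖(b j : C)‖ :=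
        (norm_le_norm_add_norm_sub _ _).trans_eq (add_comm _ _)
      _ ≤ _ := by gcongr

theorem norm_apply_le_sum_norm_linkMap_Ioc_right (hf : ∀ a : A, ‖(f a : C)‖ = ‖(a : C)‖)
    (b : ℤ →₀ A) {r : ℤ} (hr : b r = 0) (j : ℤ) (hj : j ≤ r) :
    ‖(b j : C)‖ ≤ ∑ m ∈ Ioc j r, ‖linkMap f b m‖ := by
  induction j, hj using Int.leInductionDown with
  | base => simp [hr]
  | pred j hjr ih =>
    rw [Ioc_sub_one_left_eq_Icc, ← Ioc_insert_left hjr, sum_insert (by simp), linkMap_apply]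
    calc ‖(b (j - 1) : C)‖ ≤ ‖(b (j - 1) : C) - f (b j)‖ + ‖(f (b j) : C)‖ :=
          norm_le_norm_sub_add _ _
      _ ≤ _ := by rw [hf]; gcongr

theorem linkMap_filter_Ico_apply_ne_zero {k l m : ℤ} (b : ℤ →₀ A)
    (hm : linkMap f (b.filter (· ∈ Ico k l)) m ≠ 0) : k ≤ m ∧ m ≤ l := by
  contrapose! hm
  rw [linkMap_apply, Finsupp.filter_apply, Finsupp.filter_apply]
  have h₁ : m - 1 ∉ Ico k l := by rw [mem_Ico]; omega
  have h₂ : m ∉ Ico k l := by rw [mem_Ico]; omega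
  simp [h₁, h₂]

theorem linkMap_filter_Ico_apply {k l m : ℤ} (hm : k ≤ m ∧ m ≤ l) (b : ℤ →₀ A) :
    linkMap f (b.filter (· ∈ Ico k l)) m =
      linkMap f b m - Finsupp.single k (b (k - 1) : C) m + Finsupp.single l (f (b l) : C) m := by
  simp only [linkMap_apply, Finsupp.filter_apply, Finsupp.single_apply, mem_Ico]
  split_ifs <;> first | omega | (subst_vars; simp)

theorem l1Norm_add_linkMap_filter_Ico_le_sum {k l : ℤ} (hkl : k ≤ l)
    (hf : ∀ a : A, ‖(f a : C)‖ = ‖(a : C)‖) {α : ℤ →₀ C} (hα : ∀ m, α m ≠ 0 → k ≤ m ∧ m ≤ l)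
    (b : ℤ →₀ A) :
    l1Norm (α + linkMap f (b.filter (· ∈ Ico k l))) ≤
      ∑ m ∈ Icc k l, ‖(α + linkMap f b) m‖ + ‖(b (k - 1) : C)‖ + ‖(b l : C)‖ := by
  have hsupp : (α + linkMap f (b.filter (· ∈ Ico k l))).support ⊆ Icc k l := by
    intro m hm
    rw [Finsupp.mem_support_iff, Finsupp.add_apply] at hm
    rw [mem_Icc]
    by_cases hαm : α m = 0
    · exact linkMap_filter_Ico_apply_ne_zero b (by simpa [hαm] using hm)
    · exact hα m hαm
  rw [l1Norm_eq_sum_of_support_subset hsupp]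
  calc ∑ m ∈ Icc k l, ‖(α + linkMap f (b.filter (· ∈ Ico k l))) m‖
      = ∑ m ∈ Icc k l, ‖(α + linkMap f b) m - Finsupp.single k (b (k - 1) : C) m
          + Finsupp.single l (f (b l) : C) m‖ := by
        refine sum_congr rfl fun m hm ↦ ?_
        rw [Finsupp.add_apply, Finsupp.add_apply, linkMap_filter_Ico_apply (mem_Icc.mp hm)]
        congr 1; abel
    _ ≤ ∑ m ∈ Icc k l, (‖(α + linkMap f b) m‖ + ‖Finsupp.single k (b (k - 1) : C) m‖
          + ‖Finsupp.single l (f (b l) : C) m‖) :=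
        sum_le_sum fun m _ ↦ (norm_add_le _ _).trans (by gcongr; exact norm_sub_le _ _)
    _ = _ := by
        rw [sum_add_distrib, sum_add_distrib, sum_norm_single_apply_of_mem (by simp [hkl]),
          sum_norm_single_apply_of_mem (by simp [hkl]), hf]

theorem l1Norm_add_linkMap_filter_Ico_le {k l : ℤ} (hkl : k ≤ l)
    (hf : ∀ a : A, ‖(f a : C)‖ = ‖(a : C)‖) {α : ℤ →₀ C} (hα : ∀ m, α m ≠ 0 → k ≤ m ∧ m ≤ l)
    (b : ℤ →₀ A) :
    l1Norm (α + linkMap f (b.filter (· ∈ Ico k l))) ≤ l1Norm (α + linkMap f b) := by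
  obtain ⟨p, r, hpk, hlr, hb⟩ := b.exists_support_subset_Ioo (k - 1) l
  have hb_out : ∀ m, m ≤ p ∨ r ≤ m → b m = 0 := fun m hm ↦
    Finsupp.notMem_support_iff.mp fun h ↦ by have := mem_Ioo.mp (hb h); omega
  set ξ := α + linkMap f b
  have hξ_out : ∀ m, m < k ∨ l < m → ξ m = linkMap f b m := fun m hm ↦ by
    rw [Finsupp.add_apply, Finsupp.notMem_support_iff.mp fun h ↦ by
      have := hα m (Finsupp.mem_support_iff.mp h); omega, zero_add]
  have hξ : ξ.support ⊆ Ioc p r := by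
    intro m hm
    rw [mem_Ioc]
    by_contra h
    apply Finsupp.mem_support_iff.mp hm
    rw [hξ_out m (by omega), linkMap_apply, hb_out m (by omega), hb_out (m - 1) (by omega)]
    simp
  have lower : ‖(b (k - 1) : C)‖ ≤ ∑ m ∈ Ioc p (k - 1), ‖ξ m‖ := by
    rw [sum_congr rfl fun m hm ↦ by rw [hξ_out m (by have := mem_Ioc.mp hm; omega)]]
    exact norm_apply_le_sum_norm_linkMap_Ioc_left hf b (hb_out p (by simp)) _ hpk
  have upper : ‖(b l : C)‖ ≤ ∑ m ∈ Ioc l r, ‖ξ m‖ := by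
    rw [sum_congr rfl fun m hm ↦ by rw [hξ_out m (by have := mem_Ioc.mp hm; omega)]]
    exact norm_apply_le_sum_norm_linkMap_Ioc_right hf b (hb_out r (by simp)) _ hlr
  have hsplit : ∑ m ∈ Ioc p r, ‖ξ m‖ =
      ∑ m ∈ Ioc p (k - 1), ‖ξ m‖ + ∑ m ∈ Icc k l, ‖ξ m‖ + ∑ m ∈ Ioc l r, ‖ξ m‖ := by
    rw [← Ioc_sub_one_left_eq_Icc, ← sum_union (Ioc_disjoint_Ioc_of_le le_rfl),
      Ioc_union_Ioc_eq_Ioc hpk (by omega), ← sum_union (Ioc_disjoint_Ioc_of_le le_rfl),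
      Ioc_union_Ioc_eq_Ioc (by omega) hlr]
  calc l1Norm (α + linkMap f (b.filter (· ∈ Ico k l)))
      ≤ ∑ m ∈ Icc k l, ‖ξ m‖ + ‖(b (k - 1) : C)‖ + ‖(b l : C)‖ :=
        l1Norm_add_linkMap_filter_Ico_le_sum hkl hf hα b
    _ ≤ ∑ m ∈ Ioc p r, ‖ξ m‖ := by linarith
    _ = l1Norm ξ := (l1Norm_eq_sum_of_support_subset hξ).symm

end Normed

end LinkMap

theorem localization_of_quotient_norm_general
    {C : Type*} [NormedAddCommGroup C] [NormedSpace ℝ C]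
    (A B : Submodule ℝ C) (f : A →ₗ[ℝ] B)
    (hf_iso : ∀ a : A, ‖((f a : B) : C)‖ = ‖(a : C)‖)
    (N : Submodule ℝ (ℤ →₀ C))
    (hN : N = Submodule.span ℝ {v : ℤ →₀ C | ∃ (a : A) (k : ℤ),
      v = Finsupp.single (k + 1) (a : C) - Finsupp.single k ((f a : C))}) :
    ∀ (k l : ℤ), k ≤ l → ∀ α : ℤ →₀ C, (∀ m : ℤ, α m ≠ 0 → k ≤ m ∧ m ≤ l) →
      sInf {r : ℝ | ∃ η ∈ N, r = ∑ m ∈ (α + η).support, ‖(α + η) m‖} =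
      sInf {r : ℝ | ∃ η ∈ N, (∀ m : ℤ, η m ≠ 0 → k ≤ m ∧ m ≤ l) ∧
        r = ∑ m ∈ (α + η).support, ‖(α + η) m‖} := by
  intro k l hkl α hα
  rw [hN, ← range_linkMap]
  apply csInf_eq_csInf_of_forall_exists_le
  · rintro _ ⟨_, ⟨b, rfl⟩, rfl⟩
    exact ⟨_, ⟨_, ⟨b.filter (· ∈ Finset.Ico k l), rfl⟩,
      fun m ↦ linkMap_filter_Ico_apply_ne_zero b, rfl⟩,
      l1Norm_add_linkMap_filter_Ico_le hkl hf_iso hα b⟩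
  · rintro _ ⟨η, hη, -, rfl⟩
    exact ⟨_, ⟨η, hη, rfl⟩, le_rfl⟩

/-- Claim 5.2 (localization): in the ℤ-indexed ℓ¹-sum `𝔇` of copies of `C` with the
subspace `𝔑` generated by the vectors `(…,0,-f(a),a,0,…)`, the quotient norm of an element
supported in an interval `[k,l]` can be computed using only perturbations from `𝔑`
supported in `[k,l]`. -/
theorem localization_of_quotient_norm
    {C : Type*} [NormedAddCommGroup C] [NormedSpace ℝ C]
    (A B : Submodule ℝ C) (f : A →ₗ[ℝ] B)
    (hf_iso : ∀ a : A, ‖((f a : B) : C)‖ = ‖(a : C)‖) (hf_surj : Function.Surjective f)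
    (N : Submodule ℝ (ℤ →₀ C))
    (hN : N = Submodule.span ℝ {v : ℤ →₀ C | ∃ (a : A) (k : ℤ),
      v = Finsupp.single (k + 1) (a : C) - Finsupp.single k ((f a : C))}) :
    ∀ (k l : ℤ), k ≤ l → ∀ α : ℤ →₀ C, (∀ m : ℤ, α m ≠ 0 → k ≤ m ∧ m ≤ l) →
      sInf {r : ℝ | ∃ η ∈ N, r = ∑ m ∈ (α + η).support, ‖(α + η) m‖} =
      sInf {r : ℝ | ∃ η ∈ N, (∀ m : ℤ, η m ≠ 0 → k ≤ m ∧ m ≤ l) ∧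
        r = ∑ m ∈ (α + η).support, ‖(α + η) m‖} :=
  localization_of_quotient_norm_general A B f hf_iso N hN
end

section
/- In the setting of Claim 5.2 (ℤ-indexed ℓ¹-sum 𝔇 of copies of C₁, subspace 𝔑, quotient 𝔠 = 𝔇/𝔑), the map j(c) = (…,0,c,0,…) + 𝔑 (with c at coordinate 0) is an isometric embedding of C₁ into 𝔠, and the shift-induced map F(α + 𝔑) = S(α) + 𝔑, where [S(α)](k) = α(k−1), is a well-defined surjective linear isometry of 𝔠 satisfying F(j(a)) = j(f₁(a)) for all a ∈ A₁. -/
/-!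
The shift sends the generators of `𝔑` to generators, and so does its inverse; as it also
preserves the `ℓ¹` norm, it induces an isometry of `𝔠`.

For `j`, the representative `η = 0` shows `‖j c‖ ≤ ‖c‖`. Conversely, since `f : A → B` is an
isometric isomorphism, Hahn–Banach can be applied forwards and backwards along `f` to extend a
norming functional `φ₀` of `c` to functionals `φ k` of norm `≤ 1` with `φ (k + 1) = φ k ∘ f`
on `A`. Then `α ↦ ∑ k, φ k (α k)` vanishes on `𝔑` and is bounded by the `ℓ¹` norm, so every
representative of `j c` has norm at least `‖c‖`.
-/

open Finsupp

theorem exists_int_chain {α : Type*} {r : α → α → Prop} (hfwd : ∀ x, ∃ y, r x y)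
    (hbwd : ∀ y, ∃ x, r x y) (x₀ : α) : ∃ φ : ℤ → α, φ 0 = x₀ ∧ ∀ k, r (φ k) (φ (k + 1)) := by
  choose fwd hfwd using hfwd
  choose bwd hbwd using hbwd
  refine ⟨fun
    | .ofNat n => fwd^[n] x₀
    | .negSucc n => bwd^[n + 1] x₀, rfl, ?_⟩
  rintro (n | _ | n)
  · show r (fwd^[n] x₀) (fwd^[n + 1] x₀)
    exact Function.iterate_succ_apply' fwd n x₀ ▸ hfwd _
  · exact hbwd x₀
  · show r (bwd^[n + 2] x₀) (bwd^[n + 1] x₀)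
    exact Function.iterate_succ_apply' bwd (n + 1) x₀ ▸ hbwd _

section Dual

variable {𝕜 E F : Type*} [RCLike 𝕜] [NormedAddCommGroup E] [NormedSpace 𝕜 E]
  [NormedAddCommGroup F] [NormedSpace 𝕜 F]

theorem exists_norm_le_extension_comp {p : Submodule 𝕜 E} (T : p →ₗᵢ[𝕜] F)
    (g : StrongDual 𝕜 F) :
    ∃ g' : StrongDual 𝕜 E, ‖g'‖ ≤ ‖g‖ ∧ ∀ x : p, g' x = g (T x) := by
  obtain ⟨g', hg'T, hg'norm⟩ := exists_extension_norm_eq p (g.comp T.toContinuousLinearMap)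
  refine ⟨g', ?_, hg'T⟩
  calc ‖g'‖ = ‖g.comp T.toContinuousLinearMap‖ := hg'norm
    _ ≤ ‖g‖ * ‖T.toContinuousLinearMap‖ := g.opNorm_comp_le _
    _ ≤ ‖g‖ := mul_le_of_le_one_right (norm_nonneg g) T.norm_toContinuousLinearMap_le

theorem exists_dual_chain {A B : Submodule 𝕜 E} (e : A ≃ₗᵢ[𝕜] B) (φ₀ : StrongDual 𝕜 E)
    (hφ₀ : ‖φ₀‖ ≤ 1) :
    ∃ φ : ℤ → StrongDual 𝕜 E, φ 0 = φ₀ ∧ (∀ k, ‖φ k‖ ≤ 1) ∧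
      ∀ k (a : A), φ (k + 1) a = φ k (e a) := by
  let unitBall := Metric.closedBall (0 : StrongDual 𝕜 E) 1
  have mem_ball {g : StrongDual 𝕜 E} : g ∈ unitBall ↔ ‖g‖ ≤ 1 := mem_closedBall_zero_iff
  have hfwd (g : unitBall) : ∃ g' : unitBall, ∀ a : A, (g' : StrongDual 𝕜 E) a = g.1 (e a) := by
    obtain ⟨g', hnorm, hg'⟩ :=
      exists_norm_le_extension_comp (B.subtypeₗᵢ.comp e.toLinearIsometry) g.1
    exact ⟨⟨g', mem_ball.2 (hnorm.trans (mem_ball.1 g.2))⟩, hg'⟩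
  have hbwd (g' : unitBall) : ∃ g : unitBall, ∀ a : A, (g' : StrongDual 𝕜 E) a = g.1 (e a) := by
    obtain ⟨g, hnorm, hg⟩ :=
      exists_norm_le_extension_comp (A.subtypeₗᵢ.comp e.symm.toLinearIsometry) g'.1
    refine ⟨⟨g, mem_ball.2 (hnorm.trans (mem_ball.1 g'.2))⟩, fun a => ?_⟩
    simp [hg]
  obtain ⟨φ, hφ0, hφ⟩ := exists_int_chain hfwd hbwd ⟨φ₀, mem_ball.2 hφ₀⟩
  exact ⟨fun k => φ k, congrArg Subtype.val hφ0, fun k => mem_ball.1 (φ k).2, hφ⟩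

end Dual

section Relations

variable {R M : Type*} [Ring R] [AddCommGroup M] [Module R M] {A B : Submodule R M}

/-- The subspace `𝔑`. -/
noncomputable def shiftRelations (f : A →ₗ[R] B) : Submodule R (ℤ →₀ M) :=
  Submodule.span R {v | ∃ (a : A) (k : ℤ), v = single (k + 1) (a : M) - single k (f a : M)}

theorem single_sub_single_mem_shiftRelations (f : A →ₗ[R] B) (a : A) (k : ℤ) :
    single (k + 1) (a : M) - single k (f a : M) ∈ shiftRelations f :=
  Submodule.subset_span ⟨a, k, rfl⟩

variable (M) in
noncomputable def shift (t : ℤ) : (ℤ →₀ M) ≃+ (ℤ →₀ M) := Finsupp.domCongr (Equiv.addRight t)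

theorem coe_shift (t : ℤ) : ⇑(shift M t) = mapDomain (· + t) :=
  funext (equivMapDomain_eq_mapDomain (Equiv.addRight t))

theorem shift_symm (t : ℤ) : (shift M t).symm = shift M (-t) := by
  simp [shift]

theorem shift_mem_shiftRelations (f : A →ₗ[R] B) (t : ℤ) {η : ℤ →₀ M}
    (hη : η ∈ shiftRelations f) : shift M t η ∈ shiftRelations f := by
  suffices shiftRelations f ≤ (shiftRelations f).comap (lmapDomain M R (· + t)) by
    rw [coe_shift]
    exact this hη
  refine Submodule.span_le.2 ?_
  rintro _ ⟨a, k, rfl⟩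
  simpa [mapDomain_sub, add_right_comm] using single_sub_single_mem_shiftRelations f a (k + t)

end Relations

theorem setOf_eq_apply_add_addEquiv {V X : Type*} [AddCommGroup V] (N : AddSubgroup V)
    (e : V ≃+ V) (he : ∀ η ∈ N, e η ∈ N) (he_symm : ∀ η ∈ N, e.symm η ∈ N) (ν : V → X)
    (hν : ∀ x, ν (e x) = ν x) (α : V) :
    {r | ∃ η ∈ N, r = ν (e α + η)} = {r | ∃ η ∈ N, r = ν (α + η)} := by
  ext r
  constructor
  · rintro ⟨η, hη, rfl⟩
    refine ⟨e.symm η, he_symm η hη, ?_⟩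
    rw [← hν (α + e.symm η), map_add, e.apply_symm_apply]
  · rintro ⟨η, hη, rfl⟩
    exact ⟨e η, he η hη, by rw [← map_add, hν]⟩

section Norm

variable {M : Type*} [NormedAddCommGroup M]

theorem sum_norm_shift (t : ℤ) (α : ℤ →₀ M) :
    ∑ m ∈ (shift M t α).support, ‖shift M t α m‖ = ∑ m ∈ α.support, ‖α m‖ := by
  rw [coe_shift]
  exact sum_mapDomain_index_inj (h := fun _ v => ‖v‖) (add_left_injective t)

variable {𝕜 : Type*} [RCLike 𝕜] [NormedSpace 𝕜 M]

theorem norm_lsum_apply_le (φ : ℤ → StrongDual 𝕜 M) (hφ : ∀ k, ‖φ k‖ ≤ 1) (α : ℤ →₀ M) :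
    ‖lsum 𝕜 (fun k => (φ k : M →ₗ[𝕜] 𝕜)) α‖ ≤ ∑ m ∈ α.support, ‖α m‖ := by
  rw [lsum_apply, Finsupp.sum]
  refine (norm_sum_le _ _).trans (Finset.sum_le_sum fun m _ => ?_)
  exact (φ m).le_of_opNorm_le (hφ m) _ |>.trans_eq (one_mul _)

theorem shiftRelations_le_ker_lsum {A B : Submodule 𝕜 M} (f : A →ₗ[𝕜] B)
    (φ : ℤ → StrongDual 𝕜 M) (hφ : ∀ k (a : A), φ (k + 1) a = φ k (f a)) :
    shiftRelations f ≤ LinearMap.ker (lsum 𝕜 (fun k => (φ k : M →ₗ[𝕜] 𝕜))) := by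
  refine Submodule.span_le.2 ?_
  rintro _ ⟨a, k, rfl⟩
  simp only [SetLike.mem_coe, LinearMap.mem_ker, map_sub, lsum_single]
  exact sub_eq_zero.2 (hφ k a)

theorem sInf_sum_norm_single_add_eq_norm {A B : Submodule 𝕜 M} (f : A →ₗ[𝕜] B)
    (hf_iso : ∀ a : A, ‖(f a : M)‖ = ‖(a : M)‖) (hf_surj : Function.Surjective f) (c : M) :
    sInf {r : ℝ | ∃ η ∈ shiftRelations f,
      r = ∑ m ∈ (single 0 c + η : ℤ →₀ M).support, ‖(single 0 c + η : ℤ →₀ M) m‖} = ‖c‖ := by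
  let e : A ≃ₗᵢ[𝕜] B := LinearIsometryEquiv.ofSurjective ⟨f, hf_iso⟩ hf_surj
  obtain ⟨φ₀, hφ₀, hφ₀c⟩ := exists_dual_vector'' 𝕜 c
  obtain ⟨φ, rfl, hφ, hrel⟩ := exists_dual_chain e φ₀ hφ₀
  refine IsLeast.csInf_eq ⟨⟨0, Submodule.zero_mem _, ?_⟩, ?_⟩
  · rw [add_zero]
    exact (sum_single_index (a := 0) (b := c) (h := fun _ v => ‖v‖) norm_zero).symm
  rintro _ ⟨η, hη, rfl⟩
  have hη0 := shiftRelations_le_ker_lsum f φ hrel hη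
  calc ‖c‖ = ‖φ 0 c‖ := by rw [hφ₀c, RCLike.norm_ofReal, abs_norm]
    _ = ‖lsum 𝕜 (fun k => (φ k : M →ₗ[𝕜] 𝕜)) (single 0 c + η)‖ := by
        rw [map_add, lsum_single, LinearMap.mem_ker.1 hη0, add_zero]
        rfl
    _ ≤ _ := norm_lsum_apply_le φ hφ _

end Norm

/-- In the ℤ-indexed ℓ¹-sum construction, `j(c) = (…,0,c,0,…) + 𝔑` is an isometric
embedding of `C` into the quotient `𝔠 = 𝔇/𝔑`, and the shift induces a well-defined
surjective linear isometry `F` of `𝔠` with `F(j(a)) = j(f(a))` for `a ∈ A`. -/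
theorem shift_induces_isometry_on_quotient
    {C : Type*} [NormedAddCommGroup C] [NormedSpace ℝ C]
    (A B : Submodule ℝ C) (f : A →ₗ[ℝ] B)
    (hf_iso : ∀ a : A, ‖((f a : B) : C)‖ = ‖(a : C)‖) (hf_surj : Function.Surjective f)
    (N : Submodule ℝ (ℤ →₀ C))
    (hN : N = Submodule.span ℝ {v : ℤ →₀ C | ∃ (a : A) (k : ℤ),
      v = Finsupp.single (k + 1) (a : C) - Finsupp.single k ((f a : C))}) :
    let S : (ℤ →₀ C) → (ℤ →₀ C) := Finsupp.mapDomain (fun k : ℤ => k + 1)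
    let qn : (ℤ →₀ C) → ℝ :=
      fun α => sInf {r : ℝ | ∃ η ∈ N, r = ∑ m ∈ (α + η).support, ‖(α + η) m‖}
    (∀ c : C, qn (Finsupp.single 0 c) = ‖c‖) ∧
    (∀ η ∈ N, S η ∈ N) ∧
    (∀ α, qn (S α) = qn α) ∧
    Function.Surjective S ∧
    (∀ a : A, S (Finsupp.single 0 (a : C)) - Finsupp.single 0 ((f a : C)) ∈ N) := by
  intro S qn
  change N = shiftRelations f at hN
  subst hN
  have hS : S = shift C 1 := (coe_shift 1).symm
  have shift_mem (t : ℤ) : ∀ η ∈ shiftRelations f, shift C t η ∈ shiftRelations f :=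
    fun _ => shift_mem_shiftRelations f t
  refine ⟨sInf_sum_norm_single_add_eq_norm f hf_iso hf_surj, hS ▸ shift_mem 1, fun α => ?_,
    hS ▸ (shift C 1).surjective, fun a => ?_⟩
  · have shift_symm_mem : ∀ η ∈ shiftRelations f, (shift C 1).symm η ∈ shiftRelations f :=
      shift_symm (M := C) 1 ▸ shift_mem (-1)
    rw [hS]
    exact congrArg sInf (setOf_eq_apply_add_addEquiv (shiftRelations f).toAddSubgroup
      (shift C 1) (shift_mem 1) shift_symm_mem (fun β => ∑ m ∈ β.support, ‖β m‖)
      (sum_norm_shift 1) α)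
  · simpa only [S, mapDomain_single] using single_sub_single_mem_shiftRelations f a 0
end
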